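/- Let Γ₁ = {(r, r^{3/2}) : r ≥ 0} and Γ₃ = {(r, −r^{3/2}) : r ≥ 0} in ℝ², and define f(r) = inf{‖γ₁ − γ₃‖ : γ₁ ∈ Γ₁, γ₃ ∈ Γ₃, ‖γ₁‖ ≥ r, ‖γ₃‖ ≥ r} for small r > 0. Then Cont(Γ₁, Γ₃) = lim_{r→0⁺} log f(r)/log r = 3/2. -/

import Mathlib

/-!
A point of either branch at distance `≥ r ≤ 1` from the origin has abscissa `s ≥ r / 2`
(if `s < 1` then `r² ≤ s² + s³ < 2 s²`), so its ordinate is at least `(r / 2) ^ (3/2)` in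
absolute value; as the two branches lie on opposite sides of the `x`-axis, this gives
`2 (r / 2) ^ (3/2) ≤ f(r) ≤ 2 r ^ (3/2)`, the upper bound being attained by the two points of
abscissa `r`. Two-sided bounds `f(r) ≍ r ^ a` force `log f(r) = a log r + O(1)`, and dividing
by `log r → -∞` gives the limit `a`.
-/

open Set Filter

/-- The separation function `f_{Γ₁,Γ₂}(r)`. -/
noncomputable def sep {E : Type*} [NormedAddCommGroup E] (Γ₁ Γ₂ : Set E) (r : ℝ) : ℝ :=
  sInf {d : ℝ | ∃ γ₁ ∈ Γ₁, ∃ γ₂ ∈ Γ₂, r ≤ ‖γ₁‖ ∧ r ≤ ‖γ₂‖ ∧ d = ‖γ₁ - γ₂‖}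

/-- A point of `ℝ²` with given coordinates. -/
noncomputable def pt2 (a b : ℝ) : EuclideanSpace ℝ (Fin 2) :=
  (WithLp.equiv 2 (Fin 2 → ℝ)).symm ![a, b]

/-- The upper half-branch `{(r, r^{3/2}) : r ≥ 0}` of the real cusp `y² = x³`. -/
noncomputable def cuspUp : Set (EuclideanSpace ℝ (Fin 2)) :=
  {p | ∃ r : ℝ, 0 ≤ r ∧ p = pt2 r (r ^ ((3:ℝ)/2))}

/-- The lower half-branch `{(r, -r^{3/2}) : r ≥ 0}`. -/
noncomputable def cuspDown : Set (EuclideanSpace ℝ (Fin 2)) :=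
  {p | ∃ r : ℝ, 0 ≤ r ∧ p = pt2 r (-(r ^ ((3:ℝ)/2)))}

open Real Topology Asymptotics

lemma tendsto_div_of_isBigO_sub_mul {α : Type*} {l : Filter α} {u v : α → ℝ} {a : ℝ}
    (hv : Tendsto v l atBot) (h : (fun x => u x - a * v x) =O[l] fun _ => (1 : ℝ)) :
    Tendsto (fun x => u x / v x) l (𝓝 a) := by
  have hsmall : Tendsto (fun x => (u x - a * v x) * (v x)⁻¹) l (𝓝 0) := by
    refine (h.mul (isBigO_refl (fun x => (v x)⁻¹) l)).trans_tendsto ?_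
    simpa only [one_mul, Function.comp_def] using tendsto_inv_atBot_zero.comp hv
  have heq : (fun x => a + (u x - a * v x) * (v x)⁻¹) =ᶠ[l] fun x => u x / v x := by
    filter_upwards [hv.eventually_ne_atBot 0] with x hx
    field_simp
    ring
  simpa only [add_zero] using (tendsto_const_nhds.add hsmall).congr' heq

theorem tendsto_log_div_log_of_rpow_bounds {f : ℝ → ℝ} {a c₁ c₂ : ℝ} (hc₁ : 0 < c₁)
    (h : ∀ᶠ r in 𝓝[>] 0, c₁ * r ^ a ≤ f r ∧ f r ≤ c₂ * r ^ a) :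
    Tendsto (fun r => log (f r) / log r) (𝓝[>] 0) (𝓝 a) := by
  refine tendsto_div_of_isBigO_sub_mul tendsto_log_nhdsGT_zero
    (IsBigO.of_bound (|log c₁| + |log c₂|) ?_)
  filter_upwards [h, self_mem_nhdsWithin] with r ⟨hlow, hupp⟩ (hr : 0 < r)
  have hpow : 0 < r ^ a := rpow_pos_of_pos hr a
  have hf : 0 < f r := lt_of_lt_of_le (by positivity) hlow
  have hc₂ : 0 < c₂ := pos_of_mul_pos_left (hf.trans_le hupp) hpow.le
  have hlog_low : log c₁ + a * log r ≤ log (f r) := by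
    rw [← log_rpow hr, ← log_mul hc₁.ne' hpow.ne']
    exact log_le_log (by positivity) hlow
  have hlog_upp : log (f r) ≤ log c₂ + a * log r := by
    rw [← log_rpow hr, ← log_mul hc₂.ne' hpow.ne']
    exact log_le_log hf hupp
  rw [norm_one, mul_one, Real.norm_eq_abs, abs_le]
  constructor <;> linarith [le_abs_self (log c₂), neg_abs_le (log c₁), abs_nonneg (log c₁), abs_nonneg (log c₂)]

lemma sq_norm_pt2 (a b : ℝ) : ‖pt2 a b‖ ^ 2 = a ^ 2 + b ^ 2 := by
  simp [EuclideanSpace.real_norm_sq_eq, pt2, Fin.sum_univ_two]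

lemma abs_le_norm_pt2_left (a b : ℝ) : |a| ≤ ‖pt2 a b‖ := by
  simpa [pt2] using PiLp.norm_apply_le (pt2 a b) 0

lemma abs_le_norm_pt2_right (a b : ℝ) : |b| ≤ ‖pt2 a b‖ := by
  simpa [pt2] using PiLp.norm_apply_le (pt2 a b) 1

lemma pt2_sub_pt2 (a b c d : ℝ) : pt2 a b - pt2 c d = pt2 (a - c) (b - d) := by
  ext i
  fin_cases i <;> simp [pt2]

section sep

variable {E : Type*} [NormedAddCommGroup E] {Γ₁ Γ₂ : Set E} {r : ℝ}

lemma sep_le_norm_sub {γ₁ γ₂ : E} (h₁ : γ₁ ∈ Γ₁) (h₂ : γ₂ ∈ Γ₂) (hr₁ : r ≤ ‖γ₁‖)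
    (hr₂ : r ≤ ‖γ₂‖) : sep Γ₁ Γ₂ r ≤ ‖γ₁ - γ₂‖ := by
  refine csInf_le ⟨0, ?_⟩ ⟨γ₁, h₁, γ₂, h₂, hr₁, hr₂, rfl⟩
  rintro d ⟨γ₁, -, γ₂, -, -, -, rfl⟩
  exact norm_nonneg _

lemma le_sep {c : ℝ} (hne : ∃ γ₁ ∈ Γ₁, ∃ γ₂ ∈ Γ₂, r ≤ ‖γ₁‖ ∧ r ≤ ‖γ₂‖)
    (h : ∀ γ₁ ∈ Γ₁, ∀ γ₂ ∈ Γ₂, r ≤ ‖γ₁‖ → r ≤ ‖γ₂‖ → c ≤ ‖γ₁ - γ₂‖) : c ≤ sep Γ₁ Γ₂ r := by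
  obtain ⟨γ₁, h₁, γ₂, h₂, hr₁, hr₂⟩ := hne
  refine le_csInf ⟨_, γ₁, h₁, γ₂, h₂, hr₁, hr₂, rfl⟩ ?_
  rintro d ⟨γ₁, h₁, γ₂, h₂, hr₁, hr₂, rfl⟩
  exact h γ₁ h₁ γ₂ h₂ hr₁ hr₂

end sep

lemma rpow_three_halves_sq {s : ℝ} (hs : 0 ≤ s) : (s ^ ((3 : ℝ) / 2)) ^ 2 = s ^ 3 := by
  rw [← rpow_natCast, ← rpow_mul hs]
  norm_num

lemma half_le_of_le_norm_pt2 {r s b : ℝ} (hr : r ≤ 1) (hs : 0 ≤ s) (hb : b ^ 2 = s ^ 3)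
    (h : r ≤ ‖pt2 s b‖) : r / 2 ≤ s := by
  rcases le_or_gt r 0 with hr0 | hr0
  · linarith
  have hsq : r ^ 2 ≤ s ^ 2 + s ^ 3 := by
    rw [← hb, ← sq_norm_pt2]
    exact pow_le_pow_left₀ hr0.le h 2
  nlinarith

lemma le_norm_pt2_self (r b : ℝ) : r ≤ ‖pt2 r b‖ :=
  (le_abs_self r).trans (abs_le_norm_pt2_left r b)

lemma sep_cusp_le {r : ℝ} (hr : 0 ≤ r) : sep cuspUp cuspDown r ≤ 2 * r ^ ((3 : ℝ) / 2) :=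
  calc sep cuspUp cuspDown r
      ≤ ‖pt2 r (r ^ ((3 : ℝ) / 2)) - pt2 r (-(r ^ ((3 : ℝ) / 2)))‖ :=
        sep_le_norm_sub ⟨r, hr, rfl⟩ ⟨r, hr, rfl⟩ (le_norm_pt2_self _ _) (le_norm_pt2_self _ _)
    _ = 2 * r ^ ((3 : ℝ) / 2) := by
        rw [pt2_sub_pt2, ← sq_eq_sq₀ (norm_nonneg _) (by positivity), sq_norm_pt2]
        ring

lemma le_sep_cusp {r : ℝ} (hr : 0 ≤ r) (hr1 : r ≤ 1) :
    2 * (r / 2) ^ ((3 : ℝ) / 2) ≤ sep cuspUp cuspDown r := by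
  refine le_sep ⟨_, ⟨r, hr, rfl⟩, _, ⟨r, hr, rfl⟩, le_norm_pt2_self _ _, le_norm_pt2_self _ _⟩ ?_
  rintro _ ⟨s, hs, rfl⟩ _ ⟨t, ht, rfl⟩ hrs hrt
  have hs' := half_le_of_le_norm_pt2 hr1 hs (rpow_three_halves_sq hs) hrs
  have ht' := half_le_of_le_norm_pt2 hr1 ht (by rw [neg_sq, rpow_three_halves_sq ht]) hrt
  calc 2 * (r / 2) ^ ((3 : ℝ) / 2)
      ≤ s ^ ((3 : ℝ) / 2) + t ^ ((3 : ℝ) / 2) := by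
        linarith [rpow_le_rpow (by positivity) hs' (by norm_num : (0 : ℝ) ≤ 3 / 2),
          rpow_le_rpow (by positivity) ht' (by norm_num : (0 : ℝ) ≤ 3 / 2)]
    _ ≤ |s ^ ((3 : ℝ) / 2) - -t ^ ((3 : ℝ) / 2)| := by
        rw [sub_neg_eq_add]
        exact le_abs_self _
    _ ≤ _ := by
        rw [pt2_sub_pt2]
        exact abs_le_norm_pt2_right _ _

/-- The contact of the two half-branches of the real cusp `y² = x³` equals `3/2`. -/
theorem cusp_contact :
    Tendsto (fun r : ℝ => Real.log (sep cuspUp cuspDown r) / Real.log r)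
      (nhdsWithin 0 (Ioi 0)) (nhds (3 / 2)) := by
  refine tendsto_log_div_log_of_rpow_bounds (c₁ := 2 / 2 ^ ((3 : ℝ) / 2)) (c₂ := 2)
    (by positivity) ?_
  filter_upwards [Ioo_mem_nhdsGT one_pos] with r ⟨hr0, hr1⟩
  refine ⟨?_, sep_cusp_le hr0.le⟩
  calc 2 / 2 ^ ((3 : ℝ) / 2) * r ^ ((3 : ℝ) / 2) = 2 * (r / 2) ^ ((3 : ℝ) / 2) := by
        rw [div_rpow hr0.le zero_le_two]
        ring
    _ ≤ sep cuspUp cuspDown r := le_sep_cusp hr0.le hr1.le
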